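/- arXiv:1902.02458 — 2 statements merged into one kernel-verified Lean document; each statement's English description precedes it below -/
import Mathlib

section
/- Let X be a locally compact Hausdorff space and let λ be a set function from the compact subsets of X to [-∞,∞] that assumes at most one of the values ∞, -∞, is not identically ∞ or -∞, and is finitely additive on compact sets. Then λ⁺ and |λ| are superadditive: if (A_t)_{t∈T} is a pairwise disjoint family of sets, each open or closed, with at most one of the closed sets among them not compact, and ⊔_{t∈T} A_t ⊆ A where A is open or closed, then λ⁺(A) ≥ Σ_{t∈T} λ⁺(A_t) and |λ|(A) ≥ Σ_{t∈T} |λ|(A_t). -/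
open Set Classical

variable {X : Type*}

/-- The positive variation on an open set: `λ⁺(U) = sup{λ(K) : K ⊆ U, K compact}`. -/
noncomputable def posVarOpen [TopologicalSpace X] (lam : Set X → EReal) (U : Set X) : EReal :=
  ⨆ (K : Set X) (_ : IsCompact K ∧ K ⊆ U), lam K

/-- The positive variation: the sup formula on open sets, and
`λ⁺(F) = inf{λ⁺(U) : F ⊆ U, U open}` on other (in particular closed) sets. -/
noncomputable def posVar [TopologicalSpace X] (lam : Set X → EReal) (A : Set X) : EReal :=
  if IsOpen A then posVarOpen lam A
  else ⨅ (U : Set X) (_ : IsOpen U ∧ A ⊆ U), posVarOpen lam U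

/-- The total variation on an open set:
`|λ|(U) = sup{∑ᵢ |λ(Kᵢ)| : K₁, …, Kₙ pairwise disjoint compact subsets of U}`. -/
noncomputable def totVarOpen [TopologicalSpace X] (lam : Set X → EReal) (U : Set X) : EReal :=
  ⨆ (n : ℕ) (K : Fin n → Set X)
    (_ : (∀ i, IsCompact (K i) ∧ K i ⊆ U) ∧ Pairwise (Function.onFun Disjoint K)),
      ∑ i, max (lam (K i)) (-(lam (K i)))

/-- The total variation: the sup formula on open sets, and
`|λ|(F) = inf{|λ|(U) : F ⊆ U, U open}` on other (in particular closed) sets. -/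
noncomputable def totVar [TopologicalSpace X] (lam : Set X → EReal) (A : Set X) : EReal :=
  if IsOpen A then totVarOpen lam A
  else ⨅ (U : Set X) (_ : IsOpen U ∧ A ⊆ U), totVarOpen lam U

/-!
`posVarOpen λ` and `totVarOpen λ` are monotone, superadditive on disjoint sets (concatenate
witnesses; for `λ⁺` this is where additivity of `λ` enters) and inner regular: their value on an
open set is approached by their outer values on compact subsets, since a witness family lies in
the compact union of its members. For such an `m`, a closed `F` inside an open `B` satisfies
`m(F) + m(B \ F) ≤ m(B)`: a compact `K ⊆ B \ F` is separated from `F` by the open set `B \ K`,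
and a compact `L ⊆ B \ K` is separated from `K` by disjoint open sets (Hausdorff). Peeling off
the closed members of a finite subfamily one at a time, and merging the open ones into a single
open set, gives finite superadditivity on open `B`; a general `B` is handled through its open
supersets.
-/

open Function

namespace EReal

lemma add_iSup_le {ι : Sort*} {x c : EReal} {f : ι → EReal} (h : ∀ i, x + f i ≤ c) :
    x + ⨆ i, f i ≤ c :=
  add_le_of_forall_lt fun _ ha _ hb ↦
    let ⟨i, hi⟩ := lt_iSup_iff.1 hb
    (add_le_add ha.le hi.le).trans (h i)

end EReal

lemma Fin.pairwise_disjoint_append {α : Type*} {n m : ℕ} {K : Fin n → Set α} {L : Fin m → Set α}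
    (hK : Pairwise (Disjoint on K)) (hL : Pairwise (Disjoint on L))
    (hKL : ∀ i j, Disjoint (K i) (L j)) : Pairwise (Disjoint on Fin.append K L) := by
  intro i j hij
  induction i using Fin.addCases <;> induction j using Fin.addCases <;>
    simp only [onFun, Fin.append_left, Fin.append_right]
  · exact hK fun h ↦ hij (congrArg _ h)
  · exact hKL _ _
  · exact (hKL _ _).symm
  · exact hL fun h ↦ hij (congrArg _ h)

section OuterExtension

variable [TopologicalSpace X]

noncomputable def outerExtension {α : Type*} [CompleteLattice α] (m : Set X → α) (A : Set X) : α :=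
  if IsOpen A then m A else ⨅ (U : Set X) (_ : IsOpen U ∧ A ⊆ U), m U

variable {α : Type*} [CompleteLattice α] {m : Set X → α} {A V : Set X}

lemma outerExtension_le (hm : Monotone m) (hV : IsOpen V) (hAV : A ⊆ V) :
    outerExtension m A ≤ m V := by
  unfold outerExtension
  split_ifs
  · exact hm hAV
  · exact iInf₂_le V ⟨hV, hAV⟩

lemma le_outerExtension {x : α} (h : ∀ V, IsOpen V → A ⊆ V → x ≤ m V) :
    x ≤ outerExtension m A := by
  unfold outerExtension
  split_ifs with hA
  · exact h A hA subset_rfl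
  · exact le_iInf₂ fun V hV ↦ h V hV.1 hV.2

end OuterExtension

structure IsInnerRegularSuperadditive [TopologicalSpace X] (m : Set X → EReal) : Prop where
  mono : Monotone m
  add_le_union : ∀ ⦃U V : Set X⦄, Disjoint U V → m U + m V ≤ m (U ∪ V)
  le_iSup_compact : ∀ U, IsOpen U →
    m U ≤ ⨆ (K : Set X) (_ : IsCompact K ∧ K ⊆ U), outerExtension m K

namespace IsInnerRegularSuperadditive

variable [TopologicalSpace X] [T2Space X] {m : Set X → EReal} (hm : IsInnerRegularSuperadditive m)
include hm

lemma outerExtension_add_le_of_isCompact {K L B : Set X} (hK : IsCompact K) (hL : IsCompact L)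
    (hKL : Disjoint K L) (hB : IsOpen B) (hKB : K ⊆ B) (hLB : L ⊆ B) :
    outerExtension m K + outerExtension m L ≤ m B := by
  obtain ⟨V, W, hV, hW, hKV, hLW, hVW⟩ := SeparatedNhds.of_isCompact_isCompact hK hL hKL
  calc outerExtension m K + outerExtension m L ≤ m (V ∩ B) + m (W ∩ B) :=
        add_le_add (outerExtension_le hm.mono (hV.inter hB) (subset_inter hKV hKB))
          (outerExtension_le hm.mono (hW.inter hB) (subset_inter hLW hLB))
    _ ≤ m (V ∩ B ∪ W ∩ B) := hm.add_le_union (hVW.mono inter_subset_left inter_subset_left)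
    _ ≤ m B := hm.mono (union_subset inter_subset_right inter_subset_right)

lemma outerExtension_add_sdiff_le_of_isCompact {K B : Set X} (hK : IsCompact K) (hB : IsOpen B)
    (hKB : K ⊆ B) : outerExtension m K + m (B \ K) ≤ m B :=
  calc outerExtension m K + m (B \ K)
      ≤ outerExtension m K + ⨆ (L : Set X) (_ : IsCompact L ∧ L ⊆ B \ K), outerExtension m L := by
        gcongr; exact hm.le_iSup_compact _ (hB.sdiff hK.isClosed)
    _ ≤ m B := EReal.add_iSup_le fun L ↦ EReal.add_iSup_le fun hL ↦
        hm.outerExtension_add_le_of_isCompact hK hL.1 (disjoint_sdiff_left.mono_left hL.2).symm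
          hB hKB (hL.2.trans sdiff_subset)

lemma outerExtension_add_sdiff_le_of_isClosed {F B : Set X} (hF : IsClosed F) (hB : IsOpen B)
    (hFB : F ⊆ B) : outerExtension m F + m (B \ F) ≤ m B :=
  calc outerExtension m F + m (B \ F)
      ≤ outerExtension m F + ⨆ (K : Set X) (_ : IsCompact K ∧ K ⊆ B \ F), outerExtension m K := by
        gcongr; exact hm.le_iSup_compact _ (hB.sdiff hF)
    _ ≤ m B := EReal.add_iSup_le fun K ↦ EReal.add_iSup_le fun hK ↦
      calc outerExtension m F + outerExtension m K ≤ m (B \ K) + outerExtension m K := by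
            gcongr
            exact outerExtension_le hm.mono (hB.sdiff hK.1.isClosed)
              (subset_sdiff.2 ⟨hFB, (disjoint_sdiff_left.mono_left hK.2).symm⟩)
        _ = outerExtension m K + m (B \ K) := add_comm _ _
        _ ≤ m B := hm.outerExtension_add_sdiff_le_of_isCompact hK.1 hB (hK.2.trans sdiff_subset)

lemma sum_outerExtension_add_le {T : Type*} {A : T → Set X}
    (hoc : ∀ t, IsOpen (A t) ∨ IsClosed (A t)) (hdisj : Pairwise (Disjoint on A))
    (S : Finset T) {B W : Set X} (hB : IsOpen B) (hW : IsOpen W) (hAB : ∀ t ∈ S, A t ⊆ B)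
    (hWB : W ⊆ B) (hAW : ∀ t ∈ S, Disjoint (A t) W) :
    ∑ t ∈ S, outerExtension m (A t) + m W ≤ m B := by
  classical
  induction S using Finset.induction_on generalizing B W with
  | empty => simpa using hm.mono hWB
  | insert a S ha ih =>
    have haS := Finset.mem_insert_self a S
    have hS : ∀ t ∈ S, t ∈ insert a S := fun _ ↦ Finset.mem_insert_of_mem
    have hAa : ∀ t ∈ S, Disjoint (A t) (A a) := fun t ht ↦ hdisj fun h ↦ ha (h ▸ ht)
    rw [Finset.sum_insert ha, add_assoc]
    rcases hoc a with ho | hc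
    · calc outerExtension m (A a) + (∑ t ∈ S, outerExtension m (A t) + m W)
          = ∑ t ∈ S, outerExtension m (A t) + (m (A a) + m W) := by
            rw [outerExtension, if_pos ho, add_left_comm]
        _ ≤ ∑ t ∈ S, outerExtension m (A t) + m (A a ∪ W) := by
            gcongr; exact hm.add_le_union (hAW a haS)
        _ ≤ m B := ih hB (ho.union hW) (fun t ht ↦ hAB t (hS t ht))
            (union_subset (hAB a haS) hWB)
            (fun t ht ↦ disjoint_union_right.2 ⟨hAa t ht, hAW t (hS t ht)⟩)
    · calc outerExtension m (A a) + (∑ t ∈ S, outerExtension m (A t) + m W)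
          ≤ outerExtension m (A a) + m (B \ A a) := by
            gcongr
            exact ih (hB.sdiff hc) hW
              (fun t ht ↦ subset_sdiff.2 ⟨hAB t (hS t ht), hAa t ht⟩)
              (subset_sdiff.2 ⟨hWB, (hAW a haS).symm⟩) (fun t ht ↦ hAW t (hS t ht))
        _ ≤ m B := hm.outerExtension_add_sdiff_le_of_isClosed hc hB (hAB a haS)

theorem iSup_sum_outerExtension_le (h0 : 0 ≤ m ∅) {T : Type*} {A : T → Set X} {B : Set X}
    (hoc : ∀ t, IsOpen (A t) ∨ IsClosed (A t)) (hdisj : Pairwise (Disjoint on A))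
    (hsub : (⋃ t, A t) ⊆ B) :
    ⨆ S : Finset T, ∑ t ∈ S, outerExtension m (A t) ≤ outerExtension m B :=
  iSup_le fun S ↦ le_outerExtension fun V hV hBV ↦
    (le_add_of_nonneg_right h0).trans <|
      hm.sum_outerExtension_add_le hoc hdisj S hV isOpen_empty
        (fun t _ ↦ (subset_iUnion A t).trans (hsub.trans hBV)) (empty_subset V)
        (fun _ _ ↦ disjoint_empty _)

end IsInnerRegularSuperadditive

section Variations

variable [TopologicalSpace X] {lam : Set X → EReal}

lemma posVar_eq_outerExtension (lam : Set X → EReal) :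
    posVar lam = outerExtension (posVarOpen lam) := rfl

lemma totVar_eq_outerExtension (lam : Set X → EReal) :
    totVar lam = outerExtension (totVarOpen lam) := rfl

lemma apply_empty_eq_zero
    (hadd : ∀ C K : Set X, IsCompact C → IsCompact K → Disjoint C K →
      lam (C ∪ K) = lam C + lam K)
    (hne : ∃ K : Set X, IsCompact K ∧ lam K ≠ ⊤ ∧ lam K ≠ ⊥) : lam ∅ = 0 := by
  obtain ⟨K, hK, htop, hbot⟩ := hne
  have h := hadd K ∅ hK isCompact_empty (disjoint_empty K)
  rw [union_empty, ← EReal.coe_toReal htop hbot] at h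
  generalize lam ∅ = s at h ⊢
  induction s using EReal.rec <;> simp_all [← EReal.coe_add]

lemma le_posVarOpen {K U : Set X} (hK : IsCompact K) (hKU : K ⊆ U) : lam K ≤ posVarOpen lam U :=
  le_iSup₂ (f := fun (K : Set X) (_ : IsCompact K ∧ K ⊆ U) ↦ lam K) K ⟨hK, hKU⟩

lemma posVarOpen_mono : Monotone (posVarOpen lam) := fun _ _ hUV ↦
  iSup₂_le fun _ hK ↦ le_posVarOpen hK.1 (hK.2.trans hUV)

lemma posVarOpen_add_le_union
    (hadd : ∀ C K : Set X, IsCompact C → IsCompact K → Disjoint C K →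
      lam (C ∪ K) = lam C + lam K)
    {U V : Set X} (hUV : Disjoint U V) :
    posVarOpen lam U + posVarOpen lam V ≤ posVarOpen lam (U ∪ V) := by
  refine EReal.add_le_of_forall_lt fun a ha b hb ↦ ?_
  obtain ⟨C, hC⟩ := lt_iSup_iff.1 ha
  obtain ⟨⟨hCc, hCU⟩, haC⟩ := lt_iSup_iff.1 hC
  obtain ⟨K, hK⟩ := lt_iSup_iff.1 hb
  obtain ⟨⟨hKc, hKV⟩, hbK⟩ := lt_iSup_iff.1 hK
  calc a + b ≤ lam C + lam K := add_le_add haC.le hbK.le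
    _ = lam (C ∪ K) := (hadd C K hCc hKc (hUV.mono hCU hKV)).symm
    _ ≤ posVarOpen lam (U ∪ V) := le_posVarOpen (hCc.union hKc) (union_subset_union hCU hKV)

lemma isInnerRegularSuperadditive_posVarOpen
    (hadd : ∀ C K : Set X, IsCompact C → IsCompact K → Disjoint C K →
      lam (C ∪ K) = lam C + lam K) :
    IsInnerRegularSuperadditive (posVarOpen lam) where
  mono := posVarOpen_mono
  add_le_union _ _ := posVarOpen_add_le_union hadd
  le_iSup_compact _ _ :=
    iSup₂_mono fun _ hK ↦ le_outerExtension fun _ _ hKV ↦ le_posVarOpen hK.1 hKV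

lemma le_totVarOpen {n : ℕ} {K : Fin n → Set X} {U : Set X}
    (hK : ∀ i, IsCompact (K i) ∧ K i ⊆ U) (hdisj : Pairwise (Disjoint on K)) :
    ∑ i, max (lam (K i)) (-(lam (K i))) ≤ totVarOpen lam U :=
  le_iSup_of_le n <| le_iSup_of_le K <| le_iSup_of_le ⟨hK, hdisj⟩ le_rfl

lemma totVarOpen_nonneg (U : Set X) : 0 ≤ totVarOpen lam U := by
  simpa using le_totVarOpen (lam := lam) (K := Fin.elim0) (U := U) (fun i ↦ i.elim0)
    (fun i ↦ i.elim0)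

lemma totVarOpen_mono : Monotone (totVarOpen lam) := fun _ _ hUV ↦
  iSup_le fun _ ↦ iSup_le fun _ ↦ iSup_le fun hK ↦
    le_totVarOpen (fun i ↦ ⟨(hK.1 i).1, (hK.1 i).2.trans hUV⟩) hK.2

lemma totVarOpen_add_le_union {U V : Set X} (hUV : Disjoint U V) :
    totVarOpen lam U + totVarOpen lam V ≤ totVarOpen lam (U ∪ V) := by
  refine EReal.add_le_of_forall_lt fun a ha b hb ↦ ?_
  obtain ⟨n, hn⟩ := lt_iSup_iff.1 ha
  obtain ⟨K, hK⟩ := lt_iSup_iff.1 hn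
  obtain ⟨⟨hKU, hKdisj⟩, haK⟩ := lt_iSup_iff.1 hK
  obtain ⟨l, hl⟩ := lt_iSup_iff.1 hb
  obtain ⟨L, hL⟩ := lt_iSup_iff.1 hl
  obtain ⟨⟨hLV, hLdisj⟩, hbL⟩ := lt_iSup_iff.1 hL
  have hKL : Pairwise (Disjoint on Fin.append K L) :=
    Fin.pairwise_disjoint_append hKdisj hLdisj fun i j ↦ hUV.mono (hKU i).2 (hLV j).2
  have hKLU : ∀ i, IsCompact (Fin.append K L i) ∧ Fin.append K L i ⊆ U ∪ V := by
    refine Fin.addCases (fun i ↦ ?_) (fun j ↦ ?_)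
    · simpa using ⟨(hKU i).1, (hKU i).2.trans subset_union_left⟩
    · simpa using ⟨(hLV j).1, (hLV j).2.trans subset_union_right⟩
  calc a + b ≤ (∑ i, max (lam (K i)) (-(lam (K i)))) + ∑ j, max (lam (L j)) (-(lam (L j))) :=
        add_le_add haK.le hbL.le
    _ = ∑ i, max (lam (Fin.append K L i)) (-(lam (Fin.append K L i))) := by
        simp [Fin.sum_univ_add]
    _ ≤ totVarOpen lam (U ∪ V) := le_totVarOpen hKLU hKL

lemma isInnerRegularSuperadditive_totVarOpen :
    IsInnerRegularSuperadditive (totVarOpen lam) where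
  mono := totVarOpen_mono
  add_le_union _ _ := totVarOpen_add_le_union
  le_iSup_compact _ _ := iSup_le fun _ ↦ iSup_le fun K ↦ iSup_le fun hK ↦
    le_iSup₂_of_le (⋃ i, K i)
      ⟨isCompact_iUnion fun i ↦ (hK.1 i).1, iUnion_subset fun i ↦ (hK.1 i).2⟩ <|
      le_outerExtension fun _ _ hKV ↦
        le_totVarOpen (fun i ↦ ⟨(hK.1 i).1, (subset_iUnion K i).trans hKV⟩) hK.2

end Variations

theorem posVar_totVar_superadditive_general
    [TopologicalSpace X] [T2Space X]
    (lam : Set X → EReal)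
    (hadd : ∀ C K : Set X, IsCompact C → IsCompact K → Disjoint C K →
      lam (C ∪ K) = lam C + lam K)
    (hne : ∃ K : Set X, IsCompact K ∧ lam K ≠ ⊤ ∧ lam K ≠ ⊥)
    {T : Type*} (A : T → Set X) (B : Set X)
    (hoc : ∀ t, IsOpen (A t) ∨ IsClosed (A t))
    (hdisj : Pairwise (Function.onFun Disjoint A))
    (hsub : (⋃ t, A t) ⊆ B) :
    (⨆ S : Finset T, ∑ t ∈ S, posVar lam (A t)) ≤ posVar lam B ∧
    (⨆ S : Finset T, ∑ t ∈ S, totVar lam (A t)) ≤ totVar lam B := by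
  have hempty : 0 ≤ posVarOpen lam ∅ :=
    (apply_empty_eq_zero hadd hne).symm.trans_le (le_posVarOpen isCompact_empty subset_rfl)
  rw [posVar_eq_outerExtension, totVar_eq_outerExtension]
  exact ⟨(isInnerRegularSuperadditive_posVarOpen hadd).iSup_sum_outerExtension_le hempty hoc
      hdisj hsub,
    isInnerRegularSuperadditive_totVarOpen.iSup_sum_outerExtension_le (totVarOpen_nonneg ∅) hoc
      hdisj hsub⟩

/-- Lemma 2.2 (s9): `λ⁺` and `|λ|` are superadditive: if `(A_t)_{t ∈ T}` is a pairwise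
disjoint family of sets, each open or closed, with at most one of the closed sets among them
not compact, and `⊔_{t∈T} A_t ⊆ A` with `A` open or closed, then
`λ⁺(A) ≥ ∑_{t∈T} λ⁺(A_t)` and `|λ|(A) ≥ ∑_{t∈T} |λ|(A_t)` (the sums of these nonnegative
terms being the suprema of their finite subsums). -/
theorem posVar_totVar_superadditive
    [TopologicalSpace X] [LocallyCompactSpace X] [T2Space X]
    (lam : Set X → EReal)
    (hadd : ∀ C K : Set X, IsCompact C → IsCompact K → Disjoint C K →
      lam (C ∪ K) = lam C + lam K)
    (hone : (∀ K : Set X, IsCompact K → lam K ≠ ⊤) ∨ (∀ K : Set X, IsCompact K → lam K ≠ ⊥))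
    (hne : ∃ K : Set X, IsCompact K ∧ lam K ≠ ⊤ ∧ lam K ≠ ⊥)
    {T : Type*} (A : T → Set X) (B : Set X)
    (hoc : ∀ t, IsOpen (A t) ∨ IsClosed (A t))
    (hdisj : Pairwise (Function.onFun Disjoint A))
    (honcp : {t : T | IsClosed (A t) ∧ ¬ IsCompact (A t)}.Subsingleton)
    (hBoc : IsOpen B ∨ IsClosed B)
    (hsub : (⋃ t, A t) ⊆ B) :
    (⨆ S : Finset T, ∑ t ∈ S, posVar lam (A t)) ≤ posVar lam B ∧
    (⨆ S : Finset T, ∑ t ∈ S, totVar lam (A t)) ≤ totVar lam B :=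
  posVar_totVar_superadditive_general lam hadd hne A B hoc hdisj hsub
end

section
/- Let X be a locally compact Hausdorff space and let λ be a set function from the compact subsets of X to [-∞,∞] that assumes at most one of the values ∞, -∞, is not identically ∞ or -∞, and is finitely additive on compact sets. Then λ⁺ is the unique smallest deficient topological measure on X satisfying λ⁺(K) ≥ λ(K) for every compact set K; that is, λ⁺(K) ≥ λ(K) for all compact K, and if ν is any deficient topological measure with ν(K) ≥ λ(K) for all compact K, then ν(A) ≥ λ⁺(A) for every open or closed set A. -/
open Set Classical

variable {X : Type*}

/-- The negative variation `λ⁻ = (-λ)⁺`. -/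
noncomputable def negVar [TopologicalSpace X] (lam : Set X → EReal) : Set X → EReal :=
  posVar (fun K => -(lam K))

/-- A deficient topological measure on a locally compact space `X`: a set function on open
and closed subsets of `X` with values in `[0,∞]`, not identically `∞`, finitely additive on
compact sets, inner compact regular on open sets, and outer regular on closed sets.
(Values on sets that are neither open nor closed are irrelevant.) -/
def IsDTME [TopologicalSpace X] (ν : Set X → EReal) : Prop :=
  (∀ A : Set X, IsOpen A ∨ IsClosed A → 0 ≤ ν A) ∧
  (∃ A : Set X, (IsOpen A ∨ IsClosed A) ∧ ν A ≠ ⊤) ∧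
  (∀ C K : Set X, IsCompact C → IsCompact K → Disjoint C K → ν (C ∪ K) = ν C + ν K) ∧
  (∀ U : Set X, IsOpen U → ν U = ⨆ (K : Set X) (_ : IsCompact K ∧ K ⊆ U), ν K) ∧
  (∀ F : Set X, IsClosed F → ν F = ⨅ (U : Set X) (_ : IsOpen U ∧ F ⊆ U), ν U)

section PosVarHelpers

variable [TopologicalSpace X] {lam : Set X → EReal}

lemma posVarOpen_mono_s5 {U V : Set X} (h : U ⊆ V) : posVarOpen lam U ≤ posVarOpen lam V :=
  iSup₂_le fun K hK => le_iSup₂ (f := fun K _ => lam K) K ⟨hK.1, hK.2.trans h⟩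

lemma lam_le_posVarOpen {K U : Set X} (hK : IsCompact K) (h : K ⊆ U) :
    lam K ≤ posVarOpen lam U := le_iSup₂ (f := fun K _ => lam K) K ⟨hK, h⟩

lemma posVar_of_isOpen {A : Set X} (hA : IsOpen A) : posVar lam A = posVarOpen lam A := if_pos hA

lemma posVar_eq_iInf (A : Set X) :
    posVar lam A = ⨅ (U : Set X) (_ : IsOpen U ∧ A ⊆ U), posVarOpen lam U := by
  rw [posVar]
  split_ifs with hA
  · exact le_antisymm (le_iInf₂ fun U hU => posVarOpen_mono_s5 hU.2)
      (iInf₂_le A ⟨hA, subset_rfl⟩)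
  · rfl

lemma posVarOpen_nonneg (h0 : lam ∅ = 0) (U : Set X) : 0 ≤ posVarOpen lam U := by
  have := lam_le_posVarOpen (lam := lam) isCompact_empty (empty_subset U)
  rwa [h0] at this

lemma posVar_nonneg (h0 : lam ∅ = 0) (A : Set X) : 0 ≤ posVar lam A := by
  rw [posVar_eq_iInf]; exact le_iInf₂ fun U _ => posVarOpen_nonneg h0 U

lemma lam_le_posVar {K : Set X} (hK : IsCompact K) : lam K ≤ posVar lam K := by
  rw [posVar_eq_iInf]; exact le_iInf₂ fun U hU => lam_le_posVarOpen hK hU.2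

lemma posVarOpen_union (h0 : lam ∅ = 0)
    (hadd : ∀ C K : Set X, IsCompact C → IsCompact K → Disjoint C K →
      lam (C ∪ K) = lam C + lam K)
    {U V : Set X} (hU : IsOpen U) (hV : IsOpen V) (hd : Disjoint U V) :
    posVarOpen lam (U ∪ V) = posVarOpen lam U + posVarOpen lam V := by
  refine le_antisymm ?_ ?_
  · refine iSup₂_le fun K hK => ?_
    obtain ⟨hKc, hKs⟩ := hK
    have h1 : K ∩ U = K \ V := by
      ext x
      constructor
      · rintro ⟨hx, hxU⟩; exact ⟨hx, fun hxV => hd.ne_of_mem hxU hxV rfl⟩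
      · rintro ⟨hx, hxV⟩
        exact ⟨hx, (hKs hx).resolve_right hxV⟩
    have h2 : K ∩ V = K \ U := by
      ext x
      constructor
      · rintro ⟨hx, hxV⟩; exact ⟨hx, fun hxU => hd.ne_of_mem hxU hxV rfl⟩
      · rintro ⟨hx, hxU⟩
        exact ⟨hx, (hKs hx).resolve_left hxU⟩
    have hc1 : IsCompact (K ∩ U) := h1 ▸ hKc.diff hV
    have hc2 : IsCompact (K ∩ V) := h2 ▸ hKc.diff hU
    have hdk : Disjoint (K ∩ U) (K ∩ V) :=
      hd.mono inter_subset_right inter_subset_right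
    have hKeq : (K ∩ U) ∪ (K ∩ V) = K := by
      rw [← inter_union_distrib_left, inter_eq_left.mpr hKs]
    have hsum := hadd _ _ hc1 hc2 hdk
    rw [hKeq] at hsum
    calc lam K = lam (K ∩ U) + lam (K ∩ V) := hsum
      _ ≤ posVarOpen lam U + posVarOpen lam V :=
          add_le_add (lam_le_posVarOpen hc1 inter_subset_right)
            (lam_le_posVarOpen hc2 inter_subset_right)
  · refine EReal.add_le_of_forall_lt fun x hx y hy => ?_
    rw [posVarOpen, lt_iSup_iff] at hx hy
    obtain ⟨K, hK⟩ := hx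
    rw [lt_iSup_iff] at hK
    obtain ⟨⟨hKc, hKs⟩, hKlt⟩ := hK
    obtain ⟨K', hK'⟩ := hy
    rw [lt_iSup_iff] at hK'
    obtain ⟨⟨hKc', hKs'⟩, hKlt'⟩ := hK'
    calc x + y ≤ lam K + lam K' := add_le_add hKlt.le hKlt'.le
      _ = lam (K ∪ K') := (hadd _ _ hKc hKc' (hd.mono hKs hKs')).symm
      _ ≤ posVarOpen lam (U ∪ V) :=
          lam_le_posVarOpen (hKc.union hKc') (union_subset_union hKs hKs')

lemma posVar_union_compact [T2Space X] (h0 : lam ∅ = 0)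
    (hadd : ∀ C K : Set X, IsCompact C → IsCompact K → Disjoint C K →
      lam (C ∪ K) = lam C + lam K)
    {C K : Set X} (hC : IsCompact C) (hK : IsCompact K) (hd : Disjoint C K) :
    posVar lam (C ∪ K) = posVar lam C + posVar lam K := by
  obtain ⟨U, V, hU, hV, hCU, hKV, hUV⟩ := SeparatedNhds.of_isCompact_isCompact hC hK hd
  refine le_antisymm ?_ ?_
  · -- posVar (C ∪ K) ≤ posVar C + posVar K
    have hCb : posVar lam C ≠ ⊥ := ne_of_gt (lt_of_lt_of_le EReal.bot_lt_zero (posVar_nonneg h0 C))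
    have hKb : posVar lam K ≠ ⊥ := ne_of_gt (lt_of_lt_of_le EReal.bot_lt_zero (posVar_nonneg h0 K))
    refine EReal.le_add_of_forall_gt (Or.inl hCb) (Or.inr hKb) fun x hx y hy => ?_
    rw [posVar_eq_iInf] at hx hy
    obtain ⟨U', hU'⟩ := iInf_lt_iff.mp hx
    obtain ⟨⟨hU'o, hCU'⟩, hU'lt⟩ := iInf_lt_iff.mp hU'
    obtain ⟨V', hV'⟩ := iInf_lt_iff.mp hy
    obtain ⟨⟨hV'o, hKV'⟩, hV'lt⟩ := iInf_lt_iff.mp hV'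
    have step1 : posVar lam (C ∪ K) ≤ posVarOpen lam ((U' ∩ U) ∪ (V' ∩ V)) := by
      rw [posVar_eq_iInf]
      exact iInf₂_le _ ⟨(hU'o.inter hU).union (hV'o.inter hV),
        union_subset_union (subset_inter hCU' hCU) (subset_inter hKV' hKV)⟩
    have step2 : posVarOpen lam ((U' ∩ U) ∪ (V' ∩ V))
        = posVarOpen lam (U' ∩ U) + posVarOpen lam (V' ∩ V) :=
      posVarOpen_union h0 hadd (hU'o.inter hU) (hV'o.inter hV)
        (hUV.mono inter_subset_right inter_subset_right)
    calc posVar lam (C ∪ K) ≤ posVarOpen lam (U' ∩ U) + posVarOpen lam (V' ∩ V) :=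
          step2 ▸ step1
      _ ≤ posVarOpen lam U' + posVarOpen lam V' :=
          add_le_add (posVarOpen_mono_s5 inter_subset_left) (posVarOpen_mono_s5 inter_subset_left)
      _ ≤ x + y := add_le_add hU'lt.le hV'lt.le
  · -- posVar C + posVar K ≤ posVar (C ∪ K)
    rw [posVar_eq_iInf (C ∪ K)]
    refine le_iInf₂ fun W hW => ?_
    obtain ⟨hWo, hWs⟩ := hW
    have h1 : posVar lam C ≤ posVarOpen lam (W ∩ U) := by
      rw [posVar_eq_iInf]
      exact iInf₂_le _ ⟨hWo.inter hU, subset_inter (subset_union_left.trans hWs |>.trans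
        (le_refl W)) hCU⟩
    have h2 : posVar lam K ≤ posVarOpen lam (W ∩ V) := by
      rw [posVar_eq_iInf]
      exact iInf₂_le _ ⟨hWo.inter hV, subset_inter (subset_union_right.trans hWs) hKV⟩
    calc posVar lam C + posVar lam K
        ≤ posVarOpen lam (W ∩ U) + posVarOpen lam (W ∩ V) := add_le_add h1 h2
      _ = posVarOpen lam ((W ∩ U) ∪ (W ∩ V)) :=
          (posVarOpen_union h0 hadd (hWo.inter hU) (hWo.inter hV)
            (hUV.mono inter_subset_right inter_subset_right)).symm
      _ ≤ posVarOpen lam W := posVarOpen_mono_s5 (union_subset inter_subset_left inter_subset_left)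

end PosVarHelpers

/-- Proposition 2.4 (II): `λ⁺` is the unique smallest deficient topological measure such that
`λ⁺(K) ≥ λ(K)` for every compact `K`: it is a deficient topological measure, it dominates `λ`
on compact sets, and any deficient topological measure `ν` with `ν(K) ≥ λ(K)` for all compact
`K` satisfies `ν(A) ≥ λ⁺(A)` for every open or closed `A`. -/
theorem posVar_smallest_DTM
    [TopologicalSpace X] [LocallyCompactSpace X] [T2Space X]
    (lam : Set X → EReal)
    (hadd : ∀ C K : Set X, IsCompact C → IsCompact K → Disjoint C K →
      lam (C ∪ K) = lam C + lam K)
    (hone : (∀ K : Set X, IsCompact K → lam K ≠ ⊤) ∨ (∀ K : Set X, IsCompact K → lam K ≠ ⊥))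
    (hne : ∃ K : Set X, IsCompact K ∧ lam K ≠ ⊤ ∧ lam K ≠ ⊥) :
    IsDTME (posVar lam) ∧
    (∀ K : Set X, IsCompact K → lam K ≤ posVar lam K) ∧
    (∀ ν : Set X → EReal, IsDTME ν → (∀ K : Set X, IsCompact K → lam K ≤ ν K) →
      ∀ A : Set X, IsOpen A ∨ IsClosed A → posVar lam A ≤ ν A) := by
  -- λ(∅) = 0
  obtain ⟨K₀, hK₀c, hK₀t, hK₀b⟩ := hne
  have h0 : lam ∅ = 0 := by
    have h := hadd ∅ K₀ isCompact_empty hK₀c (disjoint_bot_left)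
    rw [empty_union] at h
    lift lam K₀ to ℝ using ⟨hK₀t, hK₀b⟩ with r hr
    have h1 : lam ∅ + (r : EReal) ≤ 0 + (r : EReal) := by
      rw [zero_add]; exact h.symm.le
    have h2 : (0 : EReal) + (r : EReal) ≤ lam ∅ + (r : EReal) := by
      rw [zero_add]; exact h.le
    rw [add_comm (lam ∅), add_comm (0 : EReal)] at h1 h2
    exact le_antisymm ((EReal.addLECancellable_coe r).add_le_add_iff_left.mp h1)
      ((EReal.addLECancellable_coe r).add_le_add_iff_left.mp h2)
  refine ⟨⟨?_, ?_, ?_, ?_, ?_⟩, ?_, ?_⟩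
  · -- nonnegativity
    exact fun A _ => posVar_nonneg h0 A
  · -- not identically ⊤
    refine ⟨∅, Or.inl isOpen_empty, ?_⟩
    rw [posVar_of_isOpen isOpen_empty]
    have hle : posVarOpen lam (∅ : Set X) ≤ 0 := by
      refine iSup₂_le fun K hK => ?_
      rw [subset_empty_iff.mp hK.2, h0]
    intro h
    rw [h] at hle
    exact absurd (lt_of_le_of_lt hle (EReal.zero_lt_top)) (lt_irrefl _)
  · -- additivity on compacts
    exact fun C K hC hK hd => posVar_union_compact h0 hadd hC hK hd
  · -- inner regularity on opens
    intro U hU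
    rw [posVar_of_isOpen hU]
    refine le_antisymm ?_ ?_
    · refine iSup₂_le fun K hK => ?_
      exact le_trans (lam_le_posVar hK.1) (le_iSup₂ (f := fun K _ => posVar lam K) K hK)
    · refine iSup₂_le fun K hK => ?_
      rw [posVar_eq_iInf]
      exact iInf₂_le U ⟨hU, hK.2⟩
  · -- outer regularity on closeds
    intro F _
    rw [posVar_eq_iInf F]
    exact iInf_congr fun U => iInf_congr fun hU => (posVar_of_isOpen hU.1).symm
  · -- λ ≤ λ⁺ on compacts
    exact fun K hK => lam_le_posVar hK
  · -- minimality
    intro ν hν hdom A hA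
    obtain ⟨hν0, hνne, hνadd, hνin, hνout⟩ := hν
    have hopen : ∀ U : Set X, IsOpen U → posVarOpen lam U ≤ ν U := by
      intro U hU
      rw [hνin U hU]
      exact iSup₂_mono fun K hK => hdom K hK.1
    by_cases hAo : IsOpen A
    · rw [posVar_of_isOpen hAo]
      exact hopen A hAo
    · have hAc : IsClosed A := hA.resolve_left hAo
      rw [posVar_eq_iInf A, hνout A hAc]
      exact iInf₂_mono fun U hU => hopen U hU.1
end
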